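/- Let S ⊆ ℝ \ {0} be a set containing at least one negative and one positive element, let m : S → ℕ with m(λ) ≥ 1 for all λ ∈ S, and let W : S → ℤ satisfy: (i) monotonicity, i.e. λ < λ' implies W(λ) ≤ W(λ'); (ii) for every k ∈ ℤ, the sum of m(λ) over all λ ∈ S with W(λ) = k equals 2 (in particular each level set is finite). Define a := sup{W(λ) : λ ∈ S, λ < 0} and b := inf{W(λ) : λ ∈ S, λ > 0}. Then a and b are finite integers and b = a or b = a + 1. -/
import Mathlib


open scoped BigOperators

/-- Abstract spectral properties of the asymptotic operator: `S` is the spectrum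
(with no zero element, and containing positive and negative elements), `m` the
multiplicity, `W` the winding, monotone in the eigenvalue, with each winding level
carrying total multiplicity 2.  Then the extremal windings
`a = max {W λ : λ < 0}` and `b = min {W λ : λ > 0}` exist and `b ∈ {a, a+1}`. -/
theorem stmt3 (S : Set ℝ) (hS : ∀ l ∈ S, l ≠ 0)
    (hneg : ∃ l ∈ S, l < 0) (hpos : ∃ l ∈ S, 0 < l)
    (m : ℝ → ℕ) (hm : ∀ l ∈ S, 1 ≤ m l)
    (W : ℝ → ℤ)
    (hmono : ∀ l ∈ S, ∀ l' ∈ S, l < l' → W l ≤ W l')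
    (hfin : ∀ k : ℤ, {l : ℝ | l ∈ S ∧ W l = k}.Finite)
    (hsum : ∀ k : ℤ, ∑ l ∈ (hfin k).toFinset, m l = 2) :
    ∃ a b : ℤ,
      IsGreatest (W '' {l ∈ S | l < 0}) a ∧
      IsLeast (W '' {l ∈ S | 0 < l}) b ∧
      (b = a ∨ b = a + 1) := by
  obtain ⟨ln, hlnS, hln⟩ := hneg
  obtain ⟨lp, hlpS, hlp⟩ := hpos
  obtain ⟨a, haP, haub⟩ := Int.exists_greatest_of_bdd
    (P := fun z => z ∈ W '' {l ∈ S | l < 0})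
    ⟨W lp, by
      rintro z ⟨l, ⟨hlS, hl⟩, rfl⟩
      exact hmono l hlS lp hlpS (hl.trans hlp)⟩
    ⟨W ln, ⟨ln, ⟨hlnS, hln⟩, rfl⟩⟩
  obtain ⟨b, hbP, hblb⟩ := Int.exists_least_of_bdd
    (P := fun z => z ∈ W '' {l ∈ S | 0 < l})
    ⟨W ln, by
      rintro z ⟨l, ⟨hlS, hl⟩, rfl⟩
      exact hmono ln hlnS l hlS (hln.trans hl)⟩
    ⟨W lp, ⟨lp, ⟨hlpS, hlp⟩, rfl⟩⟩
  refine ⟨a, b, ⟨haP, haub⟩, ⟨hbP, hblb⟩, ?_⟩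
  -- a ≤ b
  obtain ⟨la, ⟨hlaS, hla⟩, hWa⟩ := haP
  obtain ⟨lb, ⟨hlbS, hlb⟩, hWb⟩ := hbP
  have hab : a ≤ b := by
    rw [← hWa, ← hWb]; exact hmono la hlaS lb hlbS (hla.trans hlb)
  -- b ≤ a + 1
  have hba : b ≤ a + 1 := by
    by_contra h
    push_neg at h
    have hempty : (hfin (a + 1)).toFinset = ∅ := by
      ext l
      simp only [Set.Finite.mem_toFinset, Set.mem_setOf_eq, Finset.notMem_empty,
        iff_false, not_and]
      rintro hlS hWl
      rcases (hS l hlS).lt_or_gt with hneg' | hpos'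
      · have := haub (W l) ⟨l, ⟨hlS, hneg'⟩, rfl⟩
        omega
      · have := hblb (W l) ⟨l, ⟨hlS, hpos'⟩, rfl⟩
        omega
    have := hsum (a + 1)
    rw [hempty] at this
    simp at this
  omega
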